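/- arXiv:1911.00207 — 2 statements merged into one kernel-verified Lean document; each statement's English description precedes it below -/
import Mathlib

section
/- Let M be a matroid on a finite set E with rank function r, and let (C_1, …, C_t) be a proper sequence of circuits of M. If for some X ⊆ E equality r(X) = |X ∪ C_{≤t}| − t holds, then C_{≤t} ⊆ cl_M(X) and every element e ∈ X \ C_{≤t} is a coloop of the restriction M|_X. -/
open Set Matroid

variable {α : Type*}

/-- A circuit of a matroid: a minimal dependent subset of the ground set. -/
def IsCircuit (M : Matroid α) (C : Set α) : Prop :=
  C ⊆ M.E ∧ ¬ M.Indep C ∧ ∀ e ∈ C, M.Indep (C \ {e})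

/-- The (natural-number) rank of a set in a matroid: the size of a largest
independent subset. -/
noncomputable def nr (M : Matroid α) (X : Set α) : ℕ :=
  sSup {k | ∃ I, I ⊆ X ∧ M.Indep I ∧ I.ncard = k}

/-- The rank of a matroid. -/
noncomputable def mrk (M : Matroid α) : ℕ := nr M M.E

/-- A cyclic set: a (possibly empty) union of circuits. -/
def Cyclic (M : Matroid α) (X : Set α) : Prop :=
  X ⊆ M.E ∧ ∀ e ∈ X, ∃ C, _root_.IsCircuit M C ∧ C ⊆ X ∧ e ∈ C

/-- A modular pair of sets in a matroid. -/
def ModPair (M : Matroid α) (X Y : Set α) : Prop :=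
  nr M X + nr M Y = nr M (X ∩ Y) + nr M (X ∪ Y)

/-- A coloop of a matroid: an element contained in every base. -/
def IsColoop (M : Matroid α) (e : α) : Prop := ∀ B, M.IsBase B → e ∈ B

/-- A proper sequence of circuits of a matroid: each circuit is not contained in the
union of the preceding ones. -/
def ProperCircuitSeq (M : Matroid α) {t : ℕ} (C : Fin t → Set α) : Prop :=
  (∀ i, _root_.IsCircuit M (C i)) ∧
    ∀ i : Fin t, 0 < (i : ℕ) → ¬ C i ⊆ ⋃ j ∈ {j : Fin t | j < i}, C j

/-!
Adding a circuit `C ⊄ S` to `S` raises the nullity `|S| - r(S)` by at least one: an element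
`e ∈ C \ S` lies in the closure of the rest. So a proper sequence of `t` circuits has union
`U` of nullity at least `t`. With `Y = X ∪ U`, the hypothesis then forces
`r(X) ≤ r(Y) ≤ r(U) + |X \ U| ≤ |Y| - t = r(X)`, so `cl(X) = cl(Y) ⊇ U`; and equality in the
middle step means that no `e ∈ X \ U` is spanned by `Y \ {e}`, let alone by `X \ {e}`.
-/

section rank
variable [Finite α] {M : Matroid α} {X Y A B : Set α} {e : α}

-- For infinite `α` this fails: `ncard` is `0` on infinite sets, so `nr` would ignore them.
lemma cast_nr (M : Matroid α) (X : Set α) : (nr M X : ℕ∞) = M.eRk X := by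
  obtain ⟨I, hI⟩ := M.exists_isBasis' X
  rw [← hI.encard_eq_eRk, ← I.toFinite.cast_ncard_eq, Nat.cast_inj]
  have hbdd : BddAbove {k | ∃ I, I ⊆ X ∧ M.Indep I ∧ I.ncard = k} :=
    ⟨Nat.card α, by rintro _ ⟨J, -, -, rfl⟩; exact ncard_le_card J⟩
  refine le_antisymm (csSup_le ⟨_, I, hI.subset, hI.indep, rfl⟩ ?_)
    (le_csSup hbdd ⟨I, hI.subset, hI.indep, rfl⟩)
  rintro _ ⟨J, hJX, hJ, rfl⟩
  rw [← Nat.cast_le (α := ℕ∞), J.toFinite.cast_ncard_eq, I.toFinite.cast_ncard_eq,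
    hI.encard_eq_eRk]
  exact hJ.encard_le_eRk_of_subset hJX

lemma nr_mono (h : X ⊆ Y) : nr M X ≤ nr M Y := by
  rw [← Nat.cast_le (α := ℕ∞), cast_nr, cast_nr]
  exact M.eRk_mono h

lemma nr_closure (M : Matroid α) (X : Set α) : nr M (M.closure X) = nr M X := by
  rw [← Nat.cast_inj (R := ℕ∞), cast_nr, cast_nr, eRk_closure_eq]

lemma nr_union_le_nr_add_ncard_sdiff (M : Matroid α) (A B : Set α) :
    nr M (A ∪ B) ≤ nr M A + (B \ A).ncard := by
  rw [← Nat.cast_le (α := ℕ∞), Nat.cast_add, cast_nr, cast_nr, (B \ A).toFinite.cast_ncard_eq,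
    ← union_sdiff_self]
  exact M.eRk_union_le_eRk_add_encard A (B \ A)

lemma closure_eq_closure_of_subset_of_nr_le (hXY : X ⊆ Y) (h : nr M Y ≤ nr M X) :
    M.closure X = M.closure Y := by
  refine (M.isRkFinite_of_finite X.toFinite).closure_eq_closure_of_subset_of_eRk_ge_eRk hXY ?_
  rwa [← cast_nr, ← cast_nr, Nat.cast_le]

lemma nr_sdiff_singleton_of_mem_closure (he : e ∈ M.closure (X \ {e})) :
    nr M (X \ {e}) = nr M X := by
  refine le_antisymm (nr_mono sdiff_subset) ?_
  calc nr M X ≤ nr M (insert e (X \ {e})) := nr_mono (subset_insert_sdiff_singleton e X)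
    _ = nr M (X \ {e}) := by
      rw [← nr_closure, closure_insert_eq_of_mem_closure he, nr_closure]

lemma nr_union_add_one_le_of_mem_closure (heB : e ∈ B) (heA : e ∉ A)
    (he : e ∈ M.closure ((A ∪ B) \ {e})) : nr M (A ∪ B) + 1 ≤ nr M A + (B \ A).ncard := by
  have hsplit : (A ∪ B) \ {e} = A ∪ B \ {e} := by
    rw [union_sdiff_distrib, sdiff_singleton_eq_self heA]
  have hcard : ((B \ {e}) \ A).ncard + 1 = (B \ A).ncard := by
    rw [sdiff_right_comm]; exact ncard_sdiff_singleton_add_one ⟨heB, heA⟩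
  have hle := nr_union_le_nr_add_ncard_sdiff M A (B \ {e})
  rw [← hsplit, nr_sdiff_singleton_of_mem_closure he] at hle
  omega

lemma Matroid.IsCircuit.nr_union_add_one_le {C S : Set α} (hC : M.IsCircuit C)
    (hCS : ¬ C ⊆ S) : nr M (S ∪ C) + 1 ≤ nr M S + (C \ S).ncard := by
  obtain ⟨e, heC, heS⟩ := not_subset.1 hCS
  refine nr_union_add_one_le_of_mem_closure heC heS ?_
  exact M.closure_subset_closure (sdiff_subset_sdiff_left subset_union_right)
    (hC.mem_closure_sdiff_singleton_of_mem heC)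

end rank

namespace ProperCircuitSeq
variable {M : Matroid α} {t : ℕ}

lemma isCircuit {C : Fin t → Set α} (hC : ProperCircuitSeq M C) (i : Fin t) :
    M.IsCircuit (C i) :=
  isCircuit_iff_dep_forall_sdiff_singleton_indep.2 ⟨⟨(hC.1 i).2.1, (hC.1 i).1⟩, (hC.1 i).2.2⟩

lemma init {C : Fin (t + 1) → Set α} (hC : ProperCircuitSeq M C) :
    ProperCircuitSeq M (C ∘ Fin.castSucc) := by
  refine ⟨fun i ↦ hC.1 _, fun i hi hsub ↦ hC.2 i.castSucc hi (hsub.trans ?_)⟩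
  exact iUnion₂_subset fun j (hj : j < i) ↦
    subset_biUnion_of_mem (u := C) (Fin.castSucc_lt_castSucc_iff.2 hj)

lemma last_not_subset {C : Fin (t + 1) → Set α} (hC : ProperCircuitSeq M C) :
    ¬ C (Fin.last t) ⊆ iUnion (C ∘ Fin.castSucc) := by
  intro hsub
  rcases Nat.eq_zero_or_pos t with rfl | ht
  · exact (hC.isCircuit _).nonempty.ne_empty (subset_empty_iff.1 (by simpa using hsub))
  · exact hC.2 (Fin.last t) ht <| hsub.trans <| iUnion_subset fun i ↦
      subset_biUnion_of_mem (u := C) (Fin.castSucc_lt_last i)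

lemma nr_iUnion_add_le [Finite α] {C : Fin t → Set α} (hC : ProperCircuitSeq M C) :
    nr M (⋃ i, C i) + t ≤ (⋃ i, C i).ncard := by
  induction t with
  | zero => simp [← Nat.cast_inj (R := ℕ∞), cast_nr]
  | succ t ih =>
    rw [iUnion_fin_add_one_eq_iUnion_castSucc]
    have hprev : nr M (iUnion (C ∘ Fin.castSucc)) + t ≤ (iUnion (C ∘ Fin.castSucc)).ncard :=
      ih hC.init
    have hstep := (hC.isCircuit (Fin.last t)).nr_union_add_one_le hC.last_not_subset
    have hcard := ncard_sdiff_add_ncard (C (Fin.last t)) (iUnion (C ∘ Fin.castSucc))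
    rw [union_comm] at hcard
    omega

end ProperCircuitSeq

/-- If `(C_1, …, C_t)` is a proper sequence of circuits of `M` and
`r(X) = |X ∪ C_{≤t}| − t` for some `X ⊆ E`, then `C_{≤t} ⊆ cl_M(X)` and every
element of `X \ C_{≤t}` is a coloop of the restriction `M|_X`. -/
theorem closure_and_coloops_of_rank_eq [Fintype α] (M : Matroid α) {t : ℕ}
    (C : Fin t → Set α) (hC : ProperCircuitSeq M C) (X : Set α) (hX : X ⊆ M.E)
    (heq : nr M X + t = (X ∪ ⋃ i, C i).ncard) :
    (⋃ i, C i) ⊆ M.closure X ∧ ∀ e ∈ X \ ⋃ i, C i, _root_.IsColoop (M ↾ X) e := by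
  set U := ⋃ i, C i
  have hnull : nr M U + t ≤ U.ncard := hC.nr_iUnion_add_le
  have hcard := ncard_sdiff_add_ncard X U
  have hfree := nr_union_le_nr_add_ncard_sdiff M U X
  have hmono : nr M X ≤ nr M (U ∪ X) := nr_mono subset_union_right
  rw [union_comm] at hcard heq
  have hcl : M.closure X = M.closure (U ∪ X) :=
    closure_eq_closure_of_subset_of_nr_le subset_union_right (by omega)
  refine ⟨?_, fun e ⟨heX, heU⟩ B hB ↦ ?_⟩
  · have hUE : U ⊆ M.E := iUnion_subset fun i ↦ (hC.isCircuit i).subset_ground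
    exact (M.subset_closure U hUE).trans (hcl ▸ M.closure_subset_closure subset_union_left)
  · have he : e ∉ M.closure ((U ∪ X) \ {e}) := fun he ↦ by
      have hdrop := nr_union_add_one_le_of_mem_closure heX heU he
      omega
    have hcoloop : (M ↾ X).IsColoop e := (restrict_isColoop_iff hX).2
      ⟨fun h ↦ he (M.closure_subset_closure (sdiff_subset_sdiff_left subset_union_right) h), heX⟩
    exact hcoloop.mem_of_isBase hB
end

section
/- Let M be a matroid on a finite set E with rank function r, and let (C_1, …, C_j) be a proper sequence of circuits of M. Then r(C_1 ∪ … ∪ C_j) ≤ Σ_{i=1}^{j} (|C_i \ C_{≤i−1}| − 1). -/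
/-!
Adding a circuit `C ⊄ X` to `X` raises the rank by at most `|C \ X| - 1`: any `e ∈ C \ X` lies
in the closure of `C \ {e}`, so it adds nothing. Summing this along a proper sequence gives the
bound. The induction runs over finite subfamilies, adding a largest index each time; restricting
the unions `C_{≤i-1}` to the subfamily only shrinks them, so properness is inherited.
-/

open Set Matroid

variable {α : Type*}

lemma isCircuit_iff_matroid_isCircuit {M : Matroid α} {C : Set α} :
    _root_.IsCircuit M C ↔ M.IsCircuit C := by
  rw [isCircuit_iff_dep_forall_sdiff_singleton_indep, Dep, _root_.IsCircuit]
  tauto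

lemma cast_nr_eq_eRk (M : Matroid α) [M.RankFinite] (X : Set α) : (nr M X : ℕ∞) = M.eRk X := by
  obtain ⟨I, hI⟩ := M.exists_isBasis' X
  have hmax : IsGreatest {k | ∃ I, I ⊆ X ∧ M.Indep I ∧ I.ncard = k} I.ncard := by
    refine ⟨⟨I, hI.subset, hI.indep, rfl⟩, ?_⟩
    rintro _ ⟨J, hJX, hJ, rfl⟩
    have := (hJ.encard_le_eRk_of_subset hJX).trans_eq hI.eRk_eq_encard
    rwa [← hJ.finite.cast_ncard_eq, ← hI.indep.finite.cast_ncard_eq, Nat.cast_le] at this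
  rw [nr, hmax.csSup_eq, hI.eRk_eq_encard, hI.indep.finite.cast_ncard_eq]

namespace Matroid

variable {M : Matroid α}

lemma IsCircuit.eRk_union_add_one_le {C X : Set α} (hC : M.IsCircuit C) (hCX : ¬ C ⊆ X) :
    M.eRk (X ∪ C) + 1 ≤ M.eRk X + (C \ X).encard := by
  obtain ⟨e, heC, heX⟩ := not_subset.mp hCX
  calc M.eRk (X ∪ C) + 1 ≤ M.eRk (X ∪ (C \ {e})) + 1 := by
        grw [M.eRk_mono (union_subset_union_right X (hC.subset_closure_sdiff_singleton e)),
          eRk_union_closure_right_eq]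
    _ = M.eRk (X ∪ ((C \ X) \ {e})) + 1 := by rw [sdiff_sdiff_comm, union_sdiff_self]
    _ ≤ M.eRk X + ((C \ X) \ {e}).encard + 1 := by grw [M.eRk_union_le_eRk_add_encard]
    _ = M.eRk X + (C \ X).encard := by
        rw [add_assoc, encard_sdiff_singleton_add_one (show e ∈ C \ X from ⟨heC, heX⟩)]

theorem eRk_biUnion_add_card_le {ι : Type*} [LinearOrder ι] {C : ι → Set α}
    (hC : ∀ i, M.IsCircuit (C i)) (hproper : ∀ i, ¬ C i ⊆ ⋃ j < i, C j) (s : Finset ι) :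
    M.eRk (⋃ i ∈ s, C i) + s.card ≤ ∑ i ∈ s, (C i \ ⋃ j ∈ {j ∈ s | j < i}, C j).encard := by
  induction s using Finset.induction_on_max with
  | empty => simp
  | insert a s hlt ih =>
    have has : a ∉ s := fun h => (hlt a h).false
    have hfilter_a : {j ∈ insert a s | j < a} = s := by
      rw [Finset.filter_insert, if_neg (lt_irrefl a), Finset.filter_true_of_mem hlt]
    have hfilter : ∀ i ∈ s, {j ∈ insert a s | j < i} = {j ∈ s | j < i} := fun i hi => by
      rw [Finset.filter_insert, if_neg (hlt i hi).not_gt]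
    have hnew : ¬ C a ⊆ ⋃ i ∈ s, C i := fun h =>
      hproper a (h.trans (biUnion_subset_biUnion_left fun i hi => hlt i hi))
    rw [Finset.set_biUnion_insert, union_comm, Finset.card_insert_of_notMem has,
      Finset.sum_insert has, hfilter_a, Finset.sum_congr rfl fun i hi => by rw [hfilter i hi]]
    calc M.eRk ((⋃ i ∈ s, C i) ∪ C a) + ↑(s.card + 1)
        = M.eRk ((⋃ i ∈ s, C i) ∪ C a) + 1 + s.card := by push_cast; ring
      _ ≤ M.eRk (⋃ i ∈ s, C i) + (C a \ ⋃ i ∈ s, C i).encard + s.card := by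
        grw [(hC a).eRk_union_add_one_le hnew]
      _ ≤ (C a \ ⋃ i ∈ s, C i).encard + ∑ i ∈ s, (C i \ ⋃ j ∈ {j ∈ s | j < i}, C j).encard := by
        grw [← ih, add_right_comm, add_comm]

end Matroid

lemma ProperCircuitSeq.not_subset_biUnion_lt {M : Matroid α} {t : ℕ} {C : Fin t → Set α}
    (hC : ProperCircuitSeq M C) (i : Fin t) : ¬ C i ⊆ ⋃ j < i, C j := by
  rcases Nat.eq_zero_or_pos i with hi | hi
  · have hempty : ⋃ j < i, C j = ∅ := by simp [Fin.lt_def, hi]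
    rw [hempty, subset_empty_iff]
    exact (isCircuit_iff_matroid_isCircuit.1 (hC.1 i)).nonempty.ne_empty
  · exact hC.2 i hi

/-- If `(C_1, …, C_j)` is a proper sequence of circuits of `M`, then
`r(C_1 ∪ … ∪ C_j) ≤ Σ_{i=1}^{j} (|C_i \ C_{≤ i−1}| − 1)`. -/
theorem rank_union_le_sum_of_properCircuitSeq [Fintype α] (M : Matroid α) {j : ℕ}
    (C : Fin j → Set α) (hC : ProperCircuitSeq M C) :
    nr M (⋃ i, C i) + j ≤ ∑ i : Fin j, (C i \ ⋃ j' ∈ {j' : Fin j | j' < i}, C j').ncard := by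
  have key := M.eRk_biUnion_add_card_le (fun i => isCircuit_iff_matroid_isCircuit.1 (hC.1 i))
    hC.not_subset_biUnion_lt Finset.univ
  rw [← Nat.cast_le (α := ℕ∞)]
  push_cast
  simp_rw [cast_nr_eq_eRk, (toFinite _).cast_ncard_eq]
  simpa using key
end
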